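/- Let p be a prime and k a commutative ring with p·1 = 0, and let W = W_d(k) be the d-th Weyl algebra over k (d ≥ 1). Let Z be the center of W, let A ⊆ W be the k-subalgebra generated by t_1, …, t_d, ∂_1^p, …, ∂_d^p (the centralizer of the t's), and let R' ⊆ Z be the k-subalgebra generated by t_1^p, …, t_d^p. Then the multiplication map Z ⊗_{R'} A_0 → A, where A_0 ⊆ A is the k-subalgebra generated by t_1, …, t_d, z ⊗ a ↦ z·a, is an isomorphism; equivalently, A ≅ Z ⊗_{R'} R where R is the polynomial algebra k[t_1,…,t_d] mapping to W by t_i ↦ t_i and R' maps to R by t_i^p ↦ t_i^p. -/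

import Mathlib

noncomputable section

/-- The defining relations of the `d`-th Weyl algebra: `t_i t_j = t_j t_i`,
`∂_i ∂_j = ∂_j ∂_i` and `∂_i t_j = t_j ∂_i + δ_{ij}`. -/
inductive WeylRel (k : Type*) [CommRing k] (d : ℕ) :
    FreeAlgebra k (Fin d ⊕ Fin d) → FreeAlgebra k (Fin d ⊕ Fin d) → Prop
  | tt (i j : Fin d) :
      WeylRel k d (FreeAlgebra.ι k (Sum.inl i) * FreeAlgebra.ι k (Sum.inl j))
        (FreeAlgebra.ι k (Sum.inl j) * FreeAlgebra.ι k (Sum.inl i))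
  | dd (i j : Fin d) :
      WeylRel k d (FreeAlgebra.ι k (Sum.inr i) * FreeAlgebra.ι k (Sum.inr j))
        (FreeAlgebra.ι k (Sum.inr j) * FreeAlgebra.ι k (Sum.inr i))
  | dt (i j : Fin d) :
      WeylRel k d (FreeAlgebra.ι k (Sum.inr i) * FreeAlgebra.ι k (Sum.inl j))
        (FreeAlgebra.ι k (Sum.inl j) * FreeAlgebra.ι k (Sum.inr i) + if i = j then 1 else 0)

/-- The `d`-th Weyl algebra over `k`: the free algebra on `t_1,…,t_d,∂_1,…,∂_d` modulo the
two-sided ideal generated by the Weyl relations. -/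
abbrev WeylAlgebra (k : Type*) [CommRing k] (d : ℕ) := RingQuot (WeylRel k d)

namespace WeylAlgebra

variable (k : Type*) [CommRing k] (d : ℕ)

/-- The generator `t_i` of the Weyl algebra. -/
def t (i : Fin d) : WeylAlgebra k d :=
  RingQuot.mkAlgHom k (WeylRel k d) (FreeAlgebra.ι k (Sum.inl i))

/-- The generator `∂_i` of the Weyl algebra. -/
def del (i : Fin d) : WeylAlgebra k d :=
  RingQuot.mkAlgHom k (WeylRel k d) (FreeAlgebra.ι k (Sum.inr i))

/-- The monomial `t^I = t_1^{i_1} ⋯ t_d^{i_d}` in the Weyl algebra. -/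
def monomialT (I : Fin d → ℕ) : WeylAlgebra k d :=
  ((List.finRange d).map fun i => t k d i ^ I i).prod

/-- The monomial `∂^J = ∂_1^{j_1} ⋯ ∂_d^{j_d}` in the Weyl algebra. -/
def monomialD (J : Fin d → ℕ) : WeylAlgebra k d :=
  ((List.finRange d).map fun i => del k d i ^ J i).prod

end WeylAlgebra

/-!
The standard monomials `t^I ∂^J` form a `k`-basis of the Weyl algebra: they span because their
span is stable under left multiplication by the generators, and they are linearly independent
because the action `t_i ↦ x_i`, `∂_i ↦ ∂/∂x_i + y_i` on `k[x, y]` sends `t^I ∂^J` to an operator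
mapping `1` to `x^I y^J`.

In this basis `[∂_i, ·]` and `[·, t_i]` lower the `t_i`- resp. `∂_i`-exponent of a monomial by
one, with the old exponent as factor. Exponents prime to `p` are units in `k`, so a central element
only involves monomials all of whose exponents are divisible by `p`; conversely `t_i^p` and `∂_i^p`
are central. In the same way `A` is spanned by the monomials whose `∂`-exponents are divisible by
`p`. Writing each `t`-exponent as `p q + r` with `r < p`, such a monomial is uniquely a central
monomial times `t^r`, which gives both existence and uniqueness of the decomposition.
-/

theorem List.prod_map_mul_of_commute {ι M : Type*} [Monoid M] (l : List ι) (f g : ι → M)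
    (h : ∀ i ∈ l, ∀ j ∈ l, Commute (g i) (f j)) :
    (l.map f).prod * (l.map g).prod = (l.map fun i => f i * g i).prod := by
  induction l with
  | nil => simp
  | cons a l ih =>
    have hga : Commute (g a) (l.map f).prod :=
      Commute.list_prod_right _ _ fun _ hy => by
        obtain ⟨j, hj, rfl⟩ := List.mem_map.mp hy
        exact h a List.mem_cons_self j (List.mem_cons_of_mem _ hj)
    simp only [List.map_cons, List.prod_cons]
    rw [mul_assoc, ← mul_assoc _ (g a), ← hga.eq, mul_assoc, ← mul_assoc (f a),
      ih fun i hi j hj => h i (List.mem_cons_of_mem _ hi) j (List.mem_cons_of_mem _ hj)]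

section FinRangeProd

variable {M : Type*} [Monoid M] {n : ℕ} (x : Fin n → M)

theorem List.prod_finRange_map_pow_add (hx : ∀ i j, Commute (x i) (x j)) (I J : Fin n → ℕ) :
    ((List.finRange n).map fun i => x i ^ (I + J) i).prod =
      ((List.finRange n).map fun i => x i ^ I i).prod *
        ((List.finRange n).map fun i => x i ^ J i).prod := by
  rw [List.prod_map_mul_of_commute _ _ _ fun i _ j _ => (hx i j).pow_pow _ _]
  simp only [Pi.add_apply, pow_add]

theorem List.prod_finRange_map_pow_single (i : Fin n) (e : ℕ) :
    ((List.finRange n).map fun j => x j ^ Pi.single i e j).prod = x i ^ e := by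
  rw [List.prod_map_eq_pow_single i _ fun j hj _ => by simp [hj]]
  simp [List.count_eq_one_of_mem (List.nodup_finRange n) (List.mem_finRange i)]

end FinRangeProd

theorem Pi.sub_single_one_eq_iff {ι : Type*} [DecidableEq ι] {a b : ι → ℕ} {i : ι}
    (h : a i ≠ 0) :
    a - Pi.single i 1 = b ↔ a = b + Pi.single i 1 := by
  simp only [funext_iff]
  refine forall_congr' fun j => ?_
  by_cases hj : j = i
  · subst hj; simp; omega
  · simp [hj]

theorem Fin.eq_of_dvd_of_add_val_eq_add_val {ι : Type*} {p : ℕ} {a b : ι → ℕ}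
    (ha : ∀ i, p ∣ a i) (hb : ∀ i, p ∣ b i) {I J : ι → Fin p}
    (h : a + (fun i => (I i : ℕ)) = b + fun i => (J i : ℕ)) : I = J := by
  funext i
  obtain ⟨u, hu⟩ := ha i
  obtain ⟨v, hv⟩ := hb i
  have hmod := congrArg (· % p) (congrFun h i)
  simpa [hu, hv, Nat.mul_add_mod, Nat.mod_eq_of_lt, Fin.ext_iff] using hmod

theorem isUnit_natCast_of_not_dvd {R : Type*} [CommRing R] {p n : ℕ} (hp : p.Prime)
    (hchar : (p : R) = 0) (hn : ¬ p ∣ n) : IsUnit (n : R) := by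
  have := (Nat.isCoprime_iff_coprime.mpr ((hp.coprime_iff_not_dvd.mpr hn).symm)).map
    (Int.castRingHom R)
  simpa [hchar, isCoprime_zero_right] using this

namespace MvPolynomial

variable {σ R : Type*} [CommSemiring R]

theorem pderiv_pderiv_comm (i j : σ) (f : MvPolynomial σ R) :
    pderiv i (pderiv j f) = pderiv j (pderiv i f) := by
  classical
  induction f using MvPolynomial.induction_on' with
  | monomial s a =>
    simp only [pderiv_monomial, tsub_right_comm]
    congr 1
    by_cases hij : i = j
    · subst hij; rfl
    · simp [Finsupp.single_eq_of_ne hij, Finsupp.single_eq_of_ne (Ne.symm hij)]; ring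
  | add f g hf hg => simp only [map_add, hf, hg]

theorem pderiv_X_pow_mul_of_ne {i j : σ} (h : j ≠ i) (n : ℕ) {q : MvPolynomial σ R}
    (hq : pderiv i q = 0) : pderiv i (X j ^ n * q) = 0 := by
  simp [pderiv_X_of_ne h, hq]

end MvPolynomial

namespace WeylAlgebra

variable {k : Type*} [CommRing k] {d p : ℕ}

theorem commute_t_t (i j : Fin d) : Commute (t k d i) (t k d j) := by
  simp only [Commute, SemiconjBy, t, ← map_mul]
  exact RingQuot.mkAlgHom_rel k (WeylRel.tt i j)

theorem commute_del_del (i j : Fin d) : Commute (del k d i) (del k d j) := by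
  simp only [Commute, SemiconjBy, del, ← map_mul]
  exact RingQuot.mkAlgHom_rel k (WeylRel.dd i j)

theorem del_mul_t (i j : Fin d) :
    del k d i * t k d j = t k d j * del k d i + if i = j then 1 else 0 := by
  simp only [t, del, ← map_mul]
  rw [RingQuot.mkAlgHom_rel k (WeylRel.dt i j)]
  simp [apply_ite (RingQuot.mkAlgHom k (WeylRel k d))]

theorem commute_del_t_of_ne {i j : Fin d} (h : i ≠ j) : Commute (del k d i) (t k d j) := by
  simpa [Commute, SemiconjBy, h] using del_mul_t (k := k) i j

theorem del_mul_t_self (i : Fin d) : del k d i * t k d i = t k d i * del k d i + 1 := by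
  simpa using del_mul_t (k := k) i i

theorem del_mul_t_pow (i : Fin d) (n : ℕ) :
    del k d i * t k d i ^ n = t k d i ^ n * del k d i + n • t k d i ^ (n - 1) := by
  induction n with
  | zero => simp
  | succ n ih =>
    rw [pow_succ, ← mul_assoc, ih, add_mul, mul_assoc, del_mul_t_self, mul_add, mul_one,
      ← mul_assoc, ← pow_succ, add_assoc, succ_nsmul]
    rcases n with _ | n
    · simp
    · simp only [smul_mul_assoc, ← pow_succ, Nat.add_sub_cancel]; abel

theorem del_pow_mul_t (i : Fin d) (n : ℕ) :
    del k d i ^ n * t k d i = t k d i * del k d i ^ n + n • del k d i ^ (n - 1) := by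
  induction n with
  | zero => simp
  | succ n ih =>
    rw [pow_succ', mul_assoc, ih, mul_add, ← mul_assoc, del_mul_t_self, add_mul, one_mul,
      mul_assoc, ← pow_succ', add_assoc, succ_nsmul]
    rcases n with _ | n
    · simp
    · simp only [mul_smul_comm, ← pow_succ', Nat.add_sub_cancel]; abel

theorem monomialT_add (I J : Fin d → ℕ) :
    monomialT k d (I + J) = monomialT k d I * monomialT k d J :=
  List.prod_finRange_map_pow_add _ commute_t_t I J

theorem monomialD_add (I J : Fin d → ℕ) :
    monomialD k d (I + J) = monomialD k d I * monomialD k d J :=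
  List.prod_finRange_map_pow_add _ commute_del_del I J

@[simp] theorem monomialT_zero : monomialT k d 0 = 1 := by simp [monomialT]

@[simp] theorem monomialD_zero : monomialD k d 0 = 1 := by simp [monomialD]

theorem monomialT_single (i : Fin d) (n : ℕ) : monomialT k d (Pi.single i n) = t k d i ^ n :=
  List.prod_finRange_map_pow_single _ i n

theorem monomialD_single (i : Fin d) (n : ℕ) : monomialD k d (Pi.single i n) = del k d i ^ n :=
  List.prod_finRange_map_pow_single _ i n

theorem monomialT_eq_pow_mul (i : Fin d) (I : Fin d → ℕ) :
    monomialT k d I = t k d i ^ I i * monomialT k d (Function.update I i 0) := by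
  rw [← monomialT_single, ← monomialT_add]
  congr 1; ext j; by_cases hj : j = i <;> simp [hj]

theorem monomialD_eq_mul_pow (i : Fin d) (J : Fin d → ℕ) :
    monomialD k d J = monomialD k d (Function.update J i 0) * del k d i ^ J i := by
  rw [← monomialD_single, ← monomialD_add]
  congr 1; ext j; by_cases hj : j = i <;> simp [hj]

theorem del_mul_monomialT (i : Fin d) (I : Fin d → ℕ) :
    del k d i * monomialT k d I =
      monomialT k d I * del k d i + I i • monomialT k d (I - Pi.single i 1) := by
  have hrest : Commute (del k d i) (monomialT k d (Function.update I i 0)) :=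
    Commute.list_prod_right _ _ fun y hy => by
      obtain ⟨j, -, rfl⟩ := List.mem_map.mp hy
      by_cases hj : j = i
      · simp [hj]
      · exact (commute_del_t_of_ne (Ne.symm hj)).pow_right _
  rw [monomialT_eq_pow_mul i I, monomialT_eq_pow_mul i (I - Pi.single i 1), ← mul_assoc,
    del_mul_t_pow, add_mul, mul_assoc, hrest.eq, ← mul_assoc, smul_mul_assoc]
  have hupdate : Function.update (I - Pi.single i 1) i 0 = Function.update I i 0 := by
    ext j; by_cases hj : j = i <;> simp [hj]
  simp [hupdate]

theorem monomialD_mul_t (i : Fin d) (J : Fin d → ℕ) :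
    monomialD k d J * t k d i =
      t k d i * monomialD k d J + J i • monomialD k d (J - Pi.single i 1) := by
  have hrest : Commute (t k d i) (monomialD k d (Function.update J i 0)) :=
    Commute.list_prod_right _ _ fun y hy => by
      obtain ⟨j, -, rfl⟩ := List.mem_map.mp hy
      by_cases hj : j = i
      · simp [hj]
      · exact (commute_del_t_of_ne hj).symm.pow_right _
  rw [monomialD_eq_mul_pow i J, monomialD_eq_mul_pow i (J - Pi.single i 1), mul_assoc,
    del_pow_mul_t, mul_add, ← mul_assoc, ← hrest.eq, mul_assoc, mul_smul_comm]
  have hupdate : Function.update (J - Pi.single i 1) i 0 = Function.update J i 0 := by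
    ext j; by_cases hj : j = i <;> simp [hj]
  simp [hupdate]

variable (k d) in
def monomial (m : (Fin d → ℕ) × (Fin d → ℕ)) : WeylAlgebra k d :=
  monomialT k d m.1 * monomialD k d m.2

@[simp] theorem monomial_zero : monomial k d 0 = 1 := by simp [monomial]

theorem t_mul_monomial (i : Fin d) (m : (Fin d → ℕ) × (Fin d → ℕ)) :
    t k d i * monomial k d m = monomial k d (m.1 + Pi.single i 1, m.2) := by
  rw [monomial, monomial, ← mul_assoc, add_comm, monomialT_add, monomialT_single, pow_one]

theorem del_mul_monomial (i : Fin d) (m : (Fin d → ℕ) × (Fin d → ℕ)) :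
    del k d i * monomial k d m =
      monomial k d (m.1, m.2 + Pi.single i 1) +
        m.1 i • monomial k d (m.1 - Pi.single i 1, m.2) := by
  rw [monomial, ← mul_assoc, del_mul_monomialT, add_mul, mul_assoc, ← pow_one (del k d i),
    ← monomialD_single, ← monomialD_add, add_comm (Pi.single i 1), smul_mul_assoc]
  rfl

theorem monomial_mul_del (i : Fin d) (m : (Fin d → ℕ) × (Fin d → ℕ)) :
    monomial k d m * del k d i = monomial k d (m.1, m.2 + Pi.single i 1) := by
  rw [monomial, monomial, mul_assoc, monomialD_add, monomialD_single, pow_one]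

theorem monomial_mul_t (i : Fin d) (m : (Fin d → ℕ) × (Fin d → ℕ)) :
    monomial k d m * t k d i =
      monomial k d (m.1 + Pi.single i 1, m.2) +
        m.2 i • monomial k d (m.1, m.2 - Pi.single i 1) := by
  rw [monomial, mul_assoc, monomialD_mul_t, mul_add, ← mul_assoc, ← pow_one (t k d i),
    ← monomialT_single, ← monomialT_add, mul_smul_comm]
  rfl

@[elab_as_elim]
theorem induction_on {motive : WeylAlgebra k d → Prop} (w : WeylAlgebra k d)
    (algebraMap : ∀ r, motive (algebraMap k _ r)) (t : ∀ i, motive (t k d i))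
    (del : ∀ i, motive (del k d i)) (add : ∀ a b, motive a → motive b → motive (a + b))
    (mul : ∀ a b, motive a → motive b → motive (a * b)) : motive w := by
  obtain ⟨f, rfl⟩ := RingQuot.mkAlgHom_surjective k (WeylRel k d) w
  induction f using FreeAlgebra.induction with
  | grade0 r => simpa using algebraMap r
  | grade1 x => cases x with
    | inl i => exact t i
    | inr i => exact del i
  | mul a b ha hb => simpa using mul _ _ ha hb
  | add a b ha hb => simpa using add _ _ ha hb

theorem span_range_monomial : Submodule.span k (Set.range (monomial k d)) = ⊤ := by
  set S := Submodule.span k (Set.range (monomial k d))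
  have stable {g : WeylAlgebra k d} (hg : ∀ m, g * monomial k d m ∈ S) :
      ∀ x ∈ S, g * x ∈ S := fun x hx =>
    (Submodule.map_span_le (LinearMap.mulLeft k g) _ S).mpr
      (by rintro _ ⟨m, rfl⟩; exact hg m) ⟨x, hx, rfl⟩
  have key (w : WeylAlgebra k d) : ∀ x ∈ S, w * x ∈ S := by
    induction w using induction_on with
    | algebraMap r => exact fun x hx => by rw [← Algebra.smul_def]; exact S.smul_mem r hx
    | t i =>
      refine stable fun m => ?_
      rw [t_mul_monomial]
      exact Submodule.subset_span ⟨_, rfl⟩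
    | del i =>
      refine stable fun m => ?_
      rw [del_mul_monomial]
      exact add_mem (Submodule.subset_span ⟨_, rfl⟩)
        (S.smul_of_tower_mem _ (Submodule.subset_span ⟨_, rfl⟩))
    | add a b ha hb => exact fun x hx => by rw [add_mul]; exact add_mem (ha x hx) (hb x hx)
    | mul a b ha hb => exact fun x hx => by rw [mul_assoc]; exact ha _ (hb x hx)
  refine Submodule.eq_top_iff'.mpr fun w => ?_
  simpa using key w 1 (Submodule.subset_span ⟨0, monomial_zero⟩)

section PolynomialRepresentation

open MvPolynomial

variable (k d) in
def polyRepGen : Fin d ⊕ Fin d → Module.End k (MvPolynomial (Fin d ⊕ Fin d) k) :=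
  Sum.elim (fun i => Algebra.lmul k _ (X (.inl i)))
    fun i => (pderiv (.inl i)).toLinearMap + Algebra.lmul k _ (X (.inr i))

theorem polyRepGen_rel {a b : FreeAlgebra k (Fin d ⊕ Fin d)} (h : WeylRel k d a b) :
    FreeAlgebra.lift k (polyRepGen k d) a = FreeAlgebra.lift k (polyRepGen k d) b := by
  cases h <;> (try split_ifs with hij) <;> (try subst hij) <;>
    refine LinearMap.ext fun q => ?_ <;>
    simp [polyRepGen, pderiv_X, pderiv_pderiv_comm, Ne.symm, *] <;> ring

variable (k d) in
def polyRep : WeylAlgebra k d →ₐ[k] Module.End k (MvPolynomial (Fin d ⊕ Fin d) k) :=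
  RingQuot.liftAlgHom k ⟨FreeAlgebra.lift k (polyRepGen k d), fun _ _ => polyRepGen_rel⟩

theorem polyRep_t (i : Fin d) : polyRep k d (t k d i) = Algebra.lmul k _ (X (.inl i)) := by
  simp [polyRep, t, polyRepGen]

theorem polyRep_del_apply (i : Fin d) (q : MvPolynomial (Fin d ⊕ Fin d) k) :
    polyRep k d (del k d i) q = pderiv (.inl i) q + X (.inr i) * q := by
  simp [polyRep, del, polyRepGen]

theorem polyRep_del_pow_apply (i : Fin d) (n : ℕ) {q : MvPolynomial (Fin d ⊕ Fin d) k}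
    (hq : ∀ j, pderiv (.inl j) q = 0) : polyRep k d (del k d i ^ n) q = X (.inr i) ^ n * q := by
  induction n with
  | zero => simp
  | succ n ih =>
    rw [pow_succ', map_mul, Module.End.mul_apply, ih, polyRep_del_apply,
      pderiv_X_pow_mul_of_ne (by simp) n (hq i), zero_add, ← mul_assoc, ← pow_succ']

theorem polyRep_monomialT (I : Fin d → ℕ) :
    polyRep k d (monomialT k d I) = Algebra.lmul k _ (∏ i, X (.inl i) ^ I i) := by
  rw [monomialT, map_list_prod, Fin.prod_univ_def, map_list_prod, List.map_map, List.map_map]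
  simp only [Function.comp_def, map_pow, polyRep_t]

theorem polyRep_monomialD_apply (J : Fin d → ℕ) {q : MvPolynomial (Fin d ⊕ Fin d) k}
    (hq : ∀ j, pderiv (.inl j) q = 0) :
    polyRep k d (monomialD k d J) q = (∏ i, X (.inr i) ^ J i) * q := by
  rw [monomialD, Fin.prod_univ_def]
  induction List.finRange d using List.reverseRecOn generalizing q with
  | nil => simp
  | append_singleton l a ih =>
    simp only [List.map_append, List.map_cons, List.map_nil, List.prod_append, List.prod_cons,
      List.prod_nil, mul_one, map_mul, Module.End.mul_apply]
    rw [polyRep_del_pow_apply a _ hq,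
      ih fun j => pderiv_X_pow_mul_of_ne (by simp) _ (hq j), mul_assoc]

theorem polyRep_monomial_apply_one (m : (Fin d → ℕ) × (Fin d → ℕ)) :
    polyRep k d (monomial k d m) 1 =
      MvPolynomial.monomial (Finsupp.equivFunOnFinite.symm (Sum.elim m.1 m.2)) 1 := by
  rw [monomial, map_mul, Module.End.mul_apply, polyRep_monomialD_apply _ fun _ => pderiv_one,
    polyRep_monomialT, monomial_eq, Finsupp.prod_fintype _ _ fun _ => pow_zero _,
    Fintype.prod_sum_type]
  simp

theorem linearIndependent_monomial : LinearIndependent k (monomial k d) := by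
  refine LinearIndependent.of_comp ((LinearMap.applyₗ 1) ∘ₗ (polyRep k d).toLinearMap) ?_
  have hcomp : (LinearMap.applyₗ 1 ∘ₗ (polyRep k d).toLinearMap) ∘ monomial k d =
      basisMonomials (Fin d ⊕ Fin d) k ∘
        fun m => Finsupp.equivFunOnFinite.symm (Sum.elim m.1 m.2) := by
    ext1 m; simp [polyRep_monomial_apply_one]
  rw [hcomp]
  refine (basisMonomials _ k).linearIndependent.comp _ fun m m' h => ?_
  have h' := congrArg (fun s : (Fin d ⊕ Fin d) →₀ ℕ => (s ∘ Sum.inl, s ∘ Sum.inr)) h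
  simpa using h'

end PolynomialRepresentation

variable (k d) in
def basisMonomial : Module.Basis ((Fin d → ℕ) × (Fin d → ℕ)) k (WeylAlgebra k d) :=
  .mk linearIndependent_monomial span_range_monomial.ge

@[simp] theorem basisMonomial_apply (m : (Fin d → ℕ) × (Fin d → ℕ)) :
    basisMonomial k d m = monomial k d m :=
  Module.Basis.mk_apply ..

@[simp] theorem basisMonomial_repr_monomial (m : (Fin d → ℕ) × (Fin d → ℕ)) :
    (basisMonomial k d).repr (monomial k d m) = Finsupp.single m 1 := by
  rw [← basisMonomial_apply, Module.Basis.repr_self]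

theorem basisMonomial_repr_del_mul_sub_mul_del (i : Fin d) (w : WeylAlgebra k d)
    (n : (Fin d → ℕ) × (Fin d → ℕ)) :
    (basisMonomial k d).repr (del k d i * w - w * del k d i) n =
      ((n.1 i + 1 : ℕ) : k) * (basisMonomial k d).repr w (n.1 + Pi.single i 1, n.2) := by
  let B := basisMonomial k d
  have key := B.ext (f₁ := Finsupp.lapply n ∘ₗ B.repr.toLinearMap ∘ₗ
      (LinearMap.mulLeft k (del k d i) - LinearMap.mulRight k (del k d i)))
    (f₂ := ((n.1 i + 1 : ℕ) : k) •
      Finsupp.lapply (n.1 + Pi.single i 1, n.2) ∘ₗ B.repr.toLinearMap)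
    fun m => by
      simp only [B, LinearMap.comp_apply, LinearMap.sub_apply, LinearMap.mulLeft_apply,
        LinearMap.mulRight_apply, LinearMap.smul_apply, basisMonomial_apply, del_mul_monomial,
        monomial_mul_del, add_sub_cancel_left, map_nsmul, basisMonomial_repr_monomial,
        LinearEquiv.coe_coe, Finsupp.lapply_apply, Finsupp.single_apply]
      rcases eq_or_ne (m.1 i) 0 with h0 | h0
      · have : m ≠ (n.1 + Pi.single i 1, n.2) := by rintro rfl; simp at h0
        simp [h0, this]
      · simp only [Prod.ext_iff, Pi.sub_single_one_eq_iff h0]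
        split_ifs with h <;> simp [h]
  simpa [B] using LinearMap.congr_fun key w

theorem basisMonomial_repr_mul_t_sub_t_mul (i : Fin d) (w : WeylAlgebra k d)
    (n : (Fin d → ℕ) × (Fin d → ℕ)) :
    (basisMonomial k d).repr (w * t k d i - t k d i * w) n =
      ((n.2 i + 1 : ℕ) : k) * (basisMonomial k d).repr w (n.1, n.2 + Pi.single i 1) := by
  let B := basisMonomial k d
  have key := B.ext (f₁ := Finsupp.lapply n ∘ₗ B.repr.toLinearMap ∘ₗ
      (LinearMap.mulRight k (t k d i) - LinearMap.mulLeft k (t k d i)))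
    (f₂ := ((n.2 i + 1 : ℕ) : k) •
      Finsupp.lapply (n.1, n.2 + Pi.single i 1) ∘ₗ B.repr.toLinearMap)
    fun m => by
      simp only [B, LinearMap.comp_apply, LinearMap.sub_apply, LinearMap.mulLeft_apply,
        LinearMap.mulRight_apply, LinearMap.smul_apply, basisMonomial_apply, t_mul_monomial,
        monomial_mul_t, add_sub_cancel_left, map_nsmul, basisMonomial_repr_monomial,
        LinearEquiv.coe_coe, Finsupp.lapply_apply, Finsupp.single_apply]
      rcases eq_or_ne (m.2 i) 0 with h0 | h0
      · have : m ≠ (n.1, n.2 + Pi.single i 1) := by rintro rfl; simp at h0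
        simp [h0, this]
      · simp only [Prod.ext_iff, Pi.sub_single_one_eq_iff h0]
        split_ifs with h <;> simp [h]
  simpa [B] using LinearMap.congr_fun key w

theorem mem_center_of_forall_commute {x : WeylAlgebra k d} (ht : ∀ i, Commute (t k d i) x)
    (hdel : ∀ i, Commute (del k d i) x) : x ∈ Subalgebra.center k (WeylAlgebra k d) := by
  rw [Subalgebra.mem_center_iff]
  intro w
  induction w using induction_on with
  | algebraMap r => exact Algebra.commutes r x
  | t i => exact ht i
  | del i => exact hdel i
  | add a b ha hb => rw [add_mul, mul_add, ha, hb]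
  | mul a b ha hb => rw [mul_assoc, hb, ← mul_assoc, ha, mul_assoc]

theorem t_pow_mem_center {n : ℕ} (hn : (n : k) = 0) (i : Fin d) :
    t k d i ^ n ∈ Subalgebra.center k (WeylAlgebra k d) := by
  refine mem_center_of_forall_commute (fun j => (commute_t_t j i).pow_right n) fun j => ?_
  by_cases hj : j = i
  · subst hj
    rw [Commute, SemiconjBy, del_mul_t_pow, ← Nat.cast_smul_eq_nsmul k, hn, zero_smul, add_zero]
  · exact (commute_del_t_of_ne hj).pow_right n

theorem del_pow_mem_center {n : ℕ} (hn : (n : k) = 0) (i : Fin d) :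
    del k d i ^ n ∈ Subalgebra.center k (WeylAlgebra k d) := by
  refine mem_center_of_forall_commute (fun j => ?_) fun j => (commute_del_del j i).pow_right n
  by_cases hj : i = j
  · subst hj
    rw [Commute, SemiconjBy, del_pow_mul_t, ← Nat.cast_smul_eq_nsmul k, hn, zero_smul, add_zero]
  · exact (commute_del_t_of_ne hj).symm.pow_right n

theorem monomialT_mem_center (hchar : (p : k) = 0) {I : Fin d → ℕ} (hI : ∀ i, p ∣ I i) :
    monomialT k d I ∈ Subalgebra.center k (WeylAlgebra k d) := by
  refine Subalgebra.list_prod_mem _ fun x hx => ?_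
  obtain ⟨i, -, rfl⟩ := List.mem_map.mp hx
  obtain ⟨c, hc⟩ := hI i
  exact t_pow_mem_center (by simp [hc, hchar]) i

theorem monomialD_mem_center (hchar : (p : k) = 0) {J : Fin d → ℕ} (hJ : ∀ i, p ∣ J i) :
    monomialD k d J ∈ Subalgebra.center k (WeylAlgebra k d) := by
  refine Subalgebra.list_prod_mem _ fun x hx => ?_
  obtain ⟨i, -, rfl⟩ := List.mem_map.mp hx
  obtain ⟨c, hc⟩ := hJ i
  exact del_pow_mem_center (by simp [hc, hchar]) i

theorem monomial_mul_monomial_of_mem_center {m : (Fin d → ℕ) × (Fin d → ℕ)}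
    (hm : monomialD k d m.2 ∈ Subalgebra.center k (WeylAlgebra k d))
    (m' : (Fin d → ℕ) × (Fin d → ℕ)) :
    monomial k d m * monomial k d m' = monomial k d (m + m') := by
  simp only [monomial, Prod.fst_add, Prod.snd_add, monomialT_add, monomialD_add]
  rw [mul_assoc, ← mul_assoc (monomialD k d m.2), ← Subalgebra.mem_center_iff.mp hm]
  simp only [mul_assoc]

theorem monomial_mul_monomialT_of_mem_center {m : (Fin d → ℕ) × (Fin d → ℕ)}
    (hm : monomialD k d m.2 ∈ Subalgebra.center k (WeylAlgebra k d)) (I : Fin d → ℕ) :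
    monomial k d m * monomialT k d I = monomial k d (m.1 + I, m.2) := by
  simpa [monomial] using monomial_mul_monomial_of_mem_center hm (I, 0)

theorem dvd_of_natCast_succ_mul_eq_zero (hp : p.Prime) (hchar : (p : k) = 0)
    {f : (Fin d → ℕ) → k} {i : Fin d}
    (hf : ∀ a : Fin d → ℕ, ((a i + 1 : ℕ) : k) * f (a + Pi.single i 1) = 0)
    {a : Fin d → ℕ} (ha : f a ≠ 0) : p ∣ a i := by
  by_contra hdvd
  have hai : a i ≠ 0 := by rintro h; exact hdvd (h ▸ dvd_zero p)
  have hpred : (a - Pi.single i 1) + Pi.single i 1 = a :=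
    ((Pi.sub_single_one_eq_iff hai).mp rfl).symm
  have hsucc : (a - Pi.single i 1 : Fin d → ℕ) i + 1 = a i := by simp; omega
  have := hf (a - Pi.single i 1)
  rw [hpred, hsucc] at this
  exact ha ((isUnit_natCast_of_not_dvd hp hchar hdvd).mul_right_eq_zero.mp this)

theorem dvd_of_mem_support_of_mem_center (hp : p.Prime) (hchar : (p : k) = 0)
    {z : WeylAlgebra k d} (hz : z ∈ Subalgebra.center k (WeylAlgebra k d))
    {m : (Fin d → ℕ) × (Fin d → ℕ)} (hm : m ∈ ((basisMonomial k d).repr z).support)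
    (i : Fin d) :
    p ∣ m.1 i ∧ p ∣ m.2 i := by
  have hm : (basisMonomial k d).repr z (m.1, m.2) ≠ 0 := Finsupp.mem_support_iff.mp hm
  have hcomm := Subalgebra.mem_center_iff.mp hz
  constructor
  · refine dvd_of_natCast_succ_mul_eq_zero hp hchar
      (f := fun a => (basisMonomial k d).repr z (a, m.2)) (fun a => ?_) hm
    simpa [hcomm] using (basisMonomial_repr_del_mul_sub_mul_del i z (a, m.2)).symm
  · refine dvd_of_natCast_succ_mul_eq_zero hp hchar
      (f := fun b => (basisMonomial k d).repr z (m.1, b)) (fun b => ?_) hm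
    simpa [hcomm] using (basisMonomial_repr_mul_t_sub_t_mul i z (m.1, b)).symm

theorem mem_center_iff_mem_span (hp : p.Prime) (hchar : (p : k) = 0) {z : WeylAlgebra k d} :
    z ∈ Subalgebra.center k (WeylAlgebra k d) ↔
      z ∈ Submodule.span k (basisMonomial k d '' {m | ∀ i, p ∣ m.1 i ∧ p ∣ m.2 i}) := by
  refine ⟨fun hz => (basisMonomial k d).mem_span_image.mpr fun m hm =>
    dvd_of_mem_support_of_mem_center hp hchar hz hm, fun hz => ?_⟩
  refine (Subalgebra.mem_toSubmodule _).mp <| Submodule.span_le.mpr ?_ hz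
  rintro _ ⟨m, hm, rfl⟩
  rw [basisMonomial_apply, SetLike.mem_coe, Subalgebra.mem_toSubmodule]
  exact mul_mem (monomialT_mem_center hchar fun i => (hm i).1)
    (monomialD_mem_center hchar fun i => (hm i).2)

theorem monomial_mem_adjoin {m : (Fin d → ℕ) × (Fin d → ℕ)} (hm : ∀ i, p ∣ m.2 i) :
    monomial k d m ∈
      Algebra.adjoin k (Set.range (t k d) ∪ Set.range fun i : Fin d => del k d i ^ p) := by
  refine mul_mem (Subalgebra.list_prod_mem _ fun x hx => ?_)
    (Subalgebra.list_prod_mem _ fun x hx => ?_)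
  · obtain ⟨i, -, rfl⟩ := List.mem_map.mp hx
    exact pow_mem (Algebra.subset_adjoin (Set.mem_union_left _ (Set.mem_range_self i))) _
  · obtain ⟨i, -, rfl⟩ := List.mem_map.mp hx
    rw [← Nat.mul_div_cancel' (hm i), pow_mul]
    exact pow_mem (Algebra.subset_adjoin (Set.mem_union_right _ (Set.mem_range_self i))) _

theorem adjoin_le_span_monomial (hchar : (p : k) = 0) :
    Subalgebra.toSubmodule
        (Algebra.adjoin k (Set.range (t k d) ∪ Set.range fun i : Fin d => del k d i ^ p)) ≤
      Submodule.span k (basisMonomial k d '' {m | ∀ i, p ∣ m.2 i}) := by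
  set S := Submodule.span k (basisMonomial k d '' {m | ∀ i, p ∣ m.2 i})
  have monomial_mem {m : (Fin d → ℕ) × (Fin d → ℕ)} (hm : ∀ i, p ∣ m.2 i) :
      monomial k d m ∈ S :=
    Submodule.subset_span ⟨m, hm, basisMonomial_apply m⟩
  have mul_mem (x y : WeylAlgebra k d) (hx : x ∈ S) (hy : y ∈ S) : x * y ∈ S := by
    have hxy := Submodule.mul_mem_mul hx hy
    rw [Submodule.span_mul_span] at hxy
    refine Submodule.span_le.mpr ?_ hxy
    rintro _ ⟨_, ⟨m, hm, rfl⟩, _, ⟨m', hm', rfl⟩, rfl⟩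
    simp only [basisMonomial_apply]
    rw [monomial_mul_monomial_of_mem_center (monomialD_mem_center hchar hm)]
    exact monomial_mem fun i => dvd_add (hm i) (hm' i)
  have one_mem : 1 ∈ S := by simpa using monomial_mem (m := 0) (by simp)
  refine fun a ha => Algebra.adjoin_le (S := S.toSubalgebra one_mem mul_mem) ?_ ha
  rintro _ (⟨i, rfl⟩ | ⟨i, rfl⟩)
  · simpa [monomial, monomialT_single] using monomial_mem (m := (Pi.single i 1, 0)) (by simp)
  · simpa [monomial, monomialD_single] using
      monomial_mem (m := (0, Pi.single i p)) fun j => by by_cases hj : j = i <;> simp [hj]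

theorem mem_adjoin_iff_mem_span (hchar : (p : k) = 0) {a : WeylAlgebra k d} :
    a ∈ Algebra.adjoin k (Set.range (t k d) ∪ Set.range fun i : Fin d => del k d i ^ p) ↔
      a ∈ Submodule.span k (basisMonomial k d '' {m | ∀ i, p ∣ m.2 i}) := by
  refine ⟨fun ha => adjoin_le_span_monomial hchar ha, fun ha => ?_⟩
  refine (Subalgebra.mem_toSubmodule _).mp (Submodule.span_le.mpr ?_ ha)
  rintro _ ⟨m, hm, rfl⟩
  rw [basisMonomial_apply, SetLike.mem_coe, Subalgebra.mem_toSubmodule]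
  exact monomial_mem_adjoin hm

theorem center_le_adjoin (hp : p.Prime) (hchar : (p : k) = 0) :
    Subalgebra.center k (WeylAlgebra k d) ≤
      Algebra.adjoin k (Set.range (t k d) ∪ Set.range fun i : Fin d => del k d i ^ p) :=
  fun _ hz => (mem_adjoin_iff_mem_span hchar).mpr <|
    Submodule.span_mono (Set.image_mono fun _ hm i => (hm i).2) <|
      (mem_center_iff_mem_span hp hchar).mp hz

theorem basisMonomial_repr_mul_monomialT (hchar : (p : k) = 0) {a : WeylAlgebra k d}
    (ha : a ∈ Algebra.adjoin k (Set.range (t k d) ∪ Set.range fun i : Fin d => del k d i ^ p))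
    (I : Fin d → ℕ) :
    (basisMonomial k d).repr (a * monomialT k d I) =
      ((basisMonomial k d).repr a).mapDomain fun m => (m.1 + I, m.2) := by
  have hspan := (mem_adjoin_iff_mem_span hchar).mp ha
  clear ha
  induction hspan using Submodule.span_induction with
  | mem x hx =>
    obtain ⟨m, hm, rfl⟩ := hx
    simp [monomial_mul_monomialT_of_mem_center (monomialD_mem_center hchar hm)]
  | zero => simp
  | add x y _ _ hx hy => simp [add_mul, hx, hy, Finsupp.mapDomain_add]
  | smul r x _ hx => simp [hx, Finsupp.mapDomain_smul]

variable (k d p) in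
/-- The multiplication map `Z ⊗_{R'} R → W`, with `Z ⊗_{R'} R` modelled as `Z^{p^d}`: `R` is free
over `R'` on the monomials `t^I` with all exponents below `p`. -/
def centerTensorMul :
    ((Fin d → Fin p) → Subalgebra.center k (WeylAlgebra k d)) →ₗ[k] WeylAlgebra k d :=
  ∑ I : Fin d → Fin p, LinearMap.mulRight k (monomialT k d fun i => (I i : ℕ)) ∘ₗ
    (Subalgebra.center k (WeylAlgebra k d)).val.toLinearMap ∘ₗ LinearMap.proj I

theorem centerTensorMul_apply (c : (Fin d → Fin p) → Subalgebra.center k (WeylAlgebra k d)) :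
    centerTensorMul k d p c =
      ∑ I, (c I : WeylAlgebra k d) * monomialT k d fun i => (I i : ℕ) := by
  simp [centerTensorMul]

theorem centerTensorMul_injective (hp : p.Prime) (hchar : (p : k) = 0) :
    Function.Injective (centerTensorMul k d p) := by
  refine (injective_iff_map_eq_zero _).mpr fun c hc => ?_
  let B := basisMonomial k d
  let shift (I : Fin d → Fin p) (m : (Fin d → ℕ) × (Fin d → ℕ)) :
      (Fin d → ℕ) × (Fin d → ℕ) :=
    (m.1 + fun i => (I i : ℕ), m.2)
  have hsupp (I : Fin d → Fin p) {m} (hm : m ∈ (B.repr (c I)).support) :=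
    dvd_of_mem_support_of_mem_center hp hchar (c I).2 hm
  have hrepr : ∑ I, (B.repr (c I)).mapDomain (shift I) = 0 := by
    simpa [centerTensorMul_apply, B, shift,
      basisMonomial_repr_mul_monomialT hchar (center_le_adjoin hp hchar (c _).2)] using
      congrArg B.repr hc
  funext I
  refine Subtype.ext (B.repr.injective (Finsupp.ext fun m => ?_))
  simp only [Pi.zero_apply, ZeroMemClass.coe_zero, map_zero, Finsupp.coe_zero]
  by_contra hm
  have hmZ := hsupp I (Finsupp.mem_support_iff.mpr hm)
  have hcoeff := congrArg (· (shift I m)) hrepr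
  simp only [Finsupp.coe_finsetSum, Finset.sum_apply, Finsupp.coe_zero, Pi.zero_apply] at hcoeff
  rw [Finset.sum_eq_single I, Finsupp.mapDomain_apply] at hcoeff
  · exact hm hcoeff
  · intro m m' h; simpa [shift, Prod.ext_iff] using h
  · intro J _ hJ
    by_contra hne
    obtain ⟨s, hs, hsm⟩ := Finset.mem_image.mp
      (Finsupp.mapDomain_support (Finsupp.mem_support_iff.mpr hne))
    exact hJ (Fin.eq_of_dvd_of_add_val_eq_add_val (fun i => (hsupp J hs i).1) (fun i => (hmZ i).1)
      (congrArg Prod.fst hsm))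
  · simp

theorem range_centerTensorMul (hp : p.Prime) (hchar : (p : k) = 0) :
    LinearMap.range (centerTensorMul k d p) = Subalgebra.toSubmodule
      (Algebra.adjoin k (Set.range (t k d) ∪ Set.range fun i : Fin d => del k d i ^ p)) := by
  apply le_antisymm
  · rintro _ ⟨c, rfl⟩
    rw [centerTensorMul_apply, Subalgebra.mem_toSubmodule]
    refine sum_mem fun I _ => mul_mem (center_le_adjoin hp hchar (c I).2) ?_
    simpa [monomial] using
      monomial_mem_adjoin (k := k) (d := d) (p := p) (m := (fun i => (I i : ℕ), 0)) (by simp)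
  · intro a ha
    refine Submodule.span_le.mpr ?_ ((mem_adjoin_iff_mem_span hchar).mp ha)
    rintro _ ⟨n, hn, rfl⟩
    let q : (Fin d → ℕ) × (Fin d → ℕ) := (fun i => p * (n.1 i / p), n.2)
    let r : Fin d → Fin p := fun i => ⟨n.1 i % p, Nat.mod_lt _ hp.pos⟩
    have hq : monomial k d q ∈ Subalgebra.center k (WeylAlgebra k d) :=
      (mem_center_iff_mem_span hp hchar).mpr
        (Submodule.subset_span
          ⟨q, fun i => ⟨dvd_mul_right _ _, hn i⟩, basisMonomial_apply q⟩)
    refine ⟨Pi.single r ⟨_, hq⟩, ?_⟩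
    rw [centerTensorMul_apply, Fintype.sum_eq_single r fun J hJ => by simp [hJ],
      Pi.single_eq_same]
    change monomial k d q * _ = _
    rw [monomial_mul_monomialT_of_mem_center (m := q) (monomialD_mem_center hchar hn),
      basisMonomial_apply]
    congr
    ext i
    exact Nat.div_add_mod (n.1 i) p

end WeylAlgebra

open WeylAlgebra in
theorem weylAlgebra_centralizer_eq_center_tensor_general (p : ℕ) (hp : p.Prime)
    (k : Type*) [CommRing k] (hchar : (p : k) = 0) (d : ℕ) :
    ∀ a : WeylAlgebra k d,
      a ∈ Algebra.adjoin k
          ((Set.range (t k d)) ∪ (Set.range fun i : Fin d => del k d i ^ p)) ↔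
        ∃! c : (Fin d → Fin p) → Subalgebra.center k (WeylAlgebra k d),
          a = ∑ I : Fin d → Fin p,
            (c I : WeylAlgebra k d) * monomialT k d fun i => (I i : ℕ) := by
  intro a
  rw [← Subalgebra.mem_toSubmodule, ← range_centerTensorMul hp hchar]
  simp_rw [eq_comm (a := a), ← centerTensorMul_apply]
  exact (centerTensorMul_injective hp hchar).mem_range_iff_existsUnique

open WeylAlgebra in
/-- In characteristic `p`, the multiplication map `Z ⊗_{R'} R → A` is an isomorphism, where
`Z` is the center of the Weyl algebra `W`, `A = k[t_1,…,t_d,∂_1^p,…,∂_d^p]` is the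
centralizer of the `t`'s, `R = k[t_1,…,t_d]` and `R' = k[t_1^p,…,t_d^p]`. Since `R` is free
over `R'` with basis the monomials `t^I` with exponents in `{0,…,p−1}`, this says precisely
that an element of `W` lies in `A` if and only if it is, in a unique way, a `Z`-linear
combination `Σ_I z_I · t^I` of these monomials. -/
theorem weylAlgebra_centralizer_eq_center_tensor (p : ℕ) (hp : p.Prime)
    (k : Type*) [CommRing k] (hchar : (p : k) = 0) (d : ℕ) (hd : 1 ≤ d) :
    ∀ a : WeylAlgebra k d,
      a ∈ Algebra.adjoin k
          ((Set.range (t k d)) ∪ (Set.range fun i : Fin d => del k d i ^ p)) ↔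
        ∃! c : (Fin d → Fin p) → Subalgebra.center k (WeylAlgebra k d),
          a = ∑ I : Fin d → Fin p,
            (c I : WeylAlgebra k d) * monomialT k d fun i => (I i : ℕ) :=
  weylAlgebra_centralizer_eq_center_tensor_general p hp k hchar d
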